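/- For any Φ ∈ ℝ^{d×S} and any symmetric positive definite Ω ∈ ℝ^{S×S} with Tr(Ω) = 1, Tr(Φ Ω^{-1} Φᵀ) ≥ (Tr((ΦᵀΦ)^{1/2}))². -/

import Mathlib

/-! A positive semidefinite `Ω` makes `⟪x, y⟫ = tr (y Ω xᵀ)` a semi-inner product on square
matrices. Cauchy–Schwarz for `x = 1` and `y = A Ω⁻¹` gives `(tr A)² ≤ tr Ω · tr (A Ω⁻¹ Aᵀ)`.
For `A = (ΦᵀΦ)^{1/2}`, which is symmetric with `A² = ΦᵀΦ`, cyclicity of the trace turns the last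
factor into `tr (Φ Ω⁻¹ Φᵀ)`. -/

open Matrix

namespace Matrix.PosSemidef

/-- The positive semidefinite square root of a positive semidefinite matrix
(the definition removed from Mathlib, restored with its old meaning). -/
noncomputable def sqrt {n 𝕜 : Type*} [Fintype n] [DecidableEq n] [RCLike 𝕜]
    [PartialOrder 𝕜] [StarOrderedRing 𝕜]
    {A : Matrix n n 𝕜} (hA : PosSemidef A) : Matrix n n 𝕜 :=
  hA.1.eigenvectorUnitary.1 * diagonal ((↑) ∘ (√·) ∘ hA.1.eigenvalues) *
  (star hA.1.eigenvectorUnitary : Matrix n n 𝕜)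

end Matrix.PosSemidef

open scoped ComplexOrder

namespace Matrix.PosSemidef

variable {n 𝕜 : Type*} [Fintype n] [DecidableEq n] [RCLike 𝕜] {A : Matrix n n 𝕜}

theorem posSemidef_sqrt (hA : A.PosSemidef) : hA.sqrt.PosSemidef :=
  (posSemidef_diagonal_iff.mpr fun i => by simp [Real.sqrt_nonneg]).mul_mul_conjTranspose_same _

theorem sqrt_mul_self (hA : A.PosSemidef) : hA.sqrt * hA.sqrt = A := by
  have hUU : (star hA.1.eigenvectorUnitary : Matrix n n 𝕜) * hA.1.eigenvectorUnitary.1 = 1 :=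
    Unitary.coe_star_mul_self _
  have hDD : (diagonal ((↑) ∘ (√·) ∘ hA.1.eigenvalues) : Matrix n n 𝕜) *
      diagonal ((↑) ∘ (√·) ∘ hA.1.eigenvalues) = diagonal (RCLike.ofReal ∘ hA.1.eigenvalues) := by
    rw [diagonal_mul_diagonal]
    congr 1
    ext i
    simp [← RCLike.ofReal_mul, Real.mul_self_sqrt (hA.eigenvalues_nonneg i)]
  conv_rhs => rw [hA.1.spectral_theorem, Unitary.conjStarAlgAut_apply, ← hDD]
  simp only [sqrt, Matrix.mul_assoc]
  rw [← Matrix.mul_assoc (star _ : Matrix n n 𝕜) _ _, hUU, Matrix.one_mul]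

end Matrix.PosSemidef

namespace Matrix

variable {n : Type*} [Fintype n]

theorem sq_trace_mul_mul_transpose_le {M : Matrix n n ℝ} (hM : M.PosSemidef)
    (x y : Matrix n n ℝ) :
    (y * M * xᵀ).trace ^ 2 ≤ (x * M * xᵀ).trace * (y * M * yᵀ).trace := by
  let := M.toMatrixSeminormedAddCommGroup hM
  let := M.toMatrixInnerProductSpace hM
  rw [sq]
  exact real_inner_mul_inner_self_le x y

theorem sq_trace_le_trace_mul_trace_mul_inv_mul_transpose [DecidableEq n] {Ω : Matrix n n ℝ}
    (hΩ : Ω.PosDef) (A : Matrix n n ℝ) : A.trace ^ 2 ≤ Ω.trace * (A * Ω⁻¹ * Aᵀ).trace := by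
  have hinv : Ω⁻¹ * Ω = 1 := Ω.nonsing_inv_mul ((isUnit_iff_isUnit_det Ω).mp hΩ.isUnit)
  have hsymm : (Ω⁻¹)ᵀ = Ω⁻¹ := by
    rw [transpose_nonsing_inv, show Ωᵀ = Ω from hΩ.isHermitian.eq]
  simpa [Matrix.mul_assoc, hinv, hsymm] using
    sq_trace_mul_mul_transpose_le hΩ.posSemidef 1 (A * Ω⁻¹)

end Matrix

/-- For any `Φ ∈ ℝ^{d×S}` and any symmetric positive definite `Ω` with `Tr(Ω) = 1`,
`Tr(Φ Ω⁻¹ Φᵀ) ≥ (Tr((ΦᵀΦ)^{1/2}))²`. -/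
theorem trace_quadratic_ge_sq_trace_sqrt
    (d S : ℕ) (Φ : Matrix (Fin d) (Fin S) ℝ)
    (Ω : Matrix (Fin S) (Fin S) ℝ) (hΩ : Ω.PosDef) (htr : Ω.trace = 1) :
    ((Matrix.posSemidef_conjTranspose_mul_self Φ).sqrt.trace) ^ 2 ≤
      (Φ * Ω⁻¹ * Φᵀ).trace := by
  set hA := Matrix.posSemidef_conjTranspose_mul_self Φ
  have hsymm : hA.sqrtᵀ = hA.sqrt := hA.posSemidef_sqrt.isHermitian.eq
  calc hA.sqrt.trace ^ 2 ≤ Ω.trace * (hA.sqrt * Ω⁻¹ * hA.sqrtᵀ).trace :=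
        sq_trace_le_trace_mul_trace_mul_inv_mul_transpose hΩ _
    _ = (hA.sqrt * hA.sqrt * Ω⁻¹).trace := by
        rw [htr, one_mul, hsymm, trace_mul_comm, ← Matrix.mul_assoc]
    _ = (Φ * Ω⁻¹ * Φᵀ).trace := by
        rw [hA.sqrt_mul_self, conjTranspose_eq_transpose_of_trivial, Matrix.mul_assoc,
          trace_mul_comm]
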